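/- arXiv:math/0601114 — 2 statements merged into one kernel-verified Lean document; each statement's English description precedes it below -/
import Mathlib

section
/- Let q be a real quadratic form of signature (1, k-1) on V, P a connected component of {v : q(v) > 0}, and C a closed convex cone in V with nonempty interior containing the closure of P. If x lies in the closure of P, y ∈ C, q(x) = 0, and q(x, y) > 0, then x + y lies in the interior of C. -/
/-!
Since `Q x = 0` and `bil Q x y > 0`, the point `z = x + t • y` has `Q z = t (2 bil Q x y + t Q y) > 0`
for small `t ∈ (0, 1)`. For `v ∈ P` close to `x` the whole segment from `v` to `v + t • y` stays in
`{Q > 0}`, so `v + t • y ∈ P`, and letting `v → x` gives `z ∈ closure P`. A component of an open set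
is relatively clopen in it, so `z ∈ closure P ∩ {Q > 0} = P ⊆ interior C`, and finally
`x + y = z + (1 - t) • y` lies in `interior C + C ⊆ interior C`.
-/

noncomputable section

/-- `Q` has signature `(1, k-1)`: it is diagonalizable with one positive and
`k - 1` negative squares. -/
def HasSignatureOnePos (k : ℕ) {V : Type*} [AddCommGroup V] [Module ℝ V]
    (Q : QuadraticForm ℝ V) : Prop :=
  ∃ e : V ≃ₗ[ℝ] (Fin 1 ⊕ Fin (k - 1) → ℝ),
    ∀ v, Q v = (e v (Sum.inl 0)) ^ 2 - ∑ i : Fin (k - 1), (e v (Sum.inr i)) ^ 2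

/-- The associated symmetric bilinear form (polarization) of `Q`. -/
def bil {V : Type*} [AddCommGroup V] [Module ℝ V]
    (Q : QuadraticForm ℝ V) (u v : V) : ℝ :=
  (Q (u + v) - Q u - Q v) / 2

open Set Topology

theorem IsOpen.closure_connectedComponentIn_inter_subset {X : Type*} [TopologicalSpace X]
    [LocallyConnectedSpace X] {U : Set X} (hU : IsOpen U) (a : X) :
    closure (connectedComponentIn U a) ∩ U ⊆ connectedComponentIn U a := by
  rintro z ⟨hz, hzU⟩
  obtain ⟨w, hwz, hwa⟩ := mem_closure_iff.mp hz _ hU.connectedComponentIn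
    (mem_connectedComponentIn hzU)
  rw [connectedComponentIn_eq hwa, ← connectedComponentIn_eq hwz]
  exact mem_connectedComponentIn hzU

theorem Convex.add_mem_of_smul_mem {E : Type*} [AddCommGroup E] [Module ℝ E] {C : Set E}
    (hconv : Convex ℝ C) (hcone : ∀ c : ℝ, 0 ≤ c → ∀ v ∈ C, c • v ∈ C) {a b : E}
    (ha : a ∈ C) (hb : b ∈ C) : a + b ∈ C := by
  have hmid : (1 / 2 : ℝ) • a + (1 / 2 : ℝ) • b ∈ C := hconv ha hb (by norm_num) (by norm_num)
    (by norm_num)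
  convert hcone 2 zero_le_two _ hmid using 1
  module

theorem Convex.add_mem_interior_of_smul_mem {E : Type*} [AddCommGroup E] [Module ℝ E]
    [TopologicalSpace E] [IsTopologicalAddGroup E] {C : Set E}
    (hconv : Convex ℝ C) (hcone : ∀ c : ℝ, 0 ≤ c → ∀ v ∈ C, c • v ∈ C) {a b : E}
    (ha : a ∈ interior C) (hb : b ∈ C) : a + b ∈ interior C := by
  have hopen : IsOpen {w | w - b ∈ interior C} :=
    isOpen_interior.preimage (continuous_sub_right b)
  have hsub : {w | w - b ∈ interior C} ⊆ C := fun w hw => by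
    simpa using hconv.add_mem_of_smul_mem hcone (interior_subset hw) hb
  exact interior_maximal hsub hopen (by simpa using ha)

section QuadraticForm

variable {V : Type*} [AddCommGroup V] [Module ℝ V] (Q : QuadraticForm ℝ V)

theorem bil_eq_associated (u v : V) : bil Q u v = QuadraticMap.associated Q u v := by
  rw [bil, QuadraticMap.associated_apply, Module.End.smul_def,
    QuadraticMap.half_moduleEnd_apply_eq_half_smul, invOf_eq_inv, smul_eq_mul]
  ring

theorem bil_self (v : V) : bil Q v v = Q v := by
  rw [bil_eq_associated, QuadraticMap.associated_eq_self_apply]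

theorem map_add_smul_eq_bil (v y : V) (s : ℝ) :
    Q (v + s • y) = Q v + s * (2 * bil Q v y + s * Q y) := by
  have hsmul : bil Q v (s • y) = s * bil Q v y := by
    simp only [bil_eq_associated, map_smul, smul_eq_mul]
  have hpolar : Q (v + s • y) = Q v + Q (s • y) + 2 * bil Q v (s • y) := by
    simp only [bil]; ring
  rw [hpolar, hsmul, QuadraticMap.map_smul, smul_eq_mul]
  ring

theorem add_smul_mem_connectedComponentIn [TopologicalSpace V] [ContinuousAdd V]
    [ContinuousSMul ℝ V] {v y : V} {t : ℝ} (ht : 0 ≤ t) (hv : 0 < Q v)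
    (hvy : 0 ≤ bil Q v y) (hty : 0 ≤ 2 * bil Q v y + t * Q y) :
    v + t • y ∈ connectedComponentIn {w | 0 < Q w} v := by
  have hpos : ∀ s ∈ Icc 0 t, 0 < Q (v + s • y) := by
    rintro s ⟨hs0, hst⟩
    have hslope : 0 ≤ 2 * bil Q v y + s * Q y := by
      rcases le_total 0 (Q y) with hy | hy
      · nlinarith [mul_nonneg hs0 hy]
      · nlinarith [mul_le_mul_of_nonpos_right hst hy]
    rw [map_add_smul_eq_bil]
    exact add_pos_of_pos_of_nonneg hv (mul_nonneg hs0 hslope)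
  have hconn : IsPreconnected ((fun s : ℝ => v + s • y) '' Icc 0 t) :=
    isPreconnected_Icc.image _ (by fun_prop : Continuous fun s : ℝ => v + s • y).continuousOn
  exact hconn.subset_connectedComponentIn ⟨0, ⟨le_rfl, ht⟩, by simp⟩
    (image_subset_iff (t := {w | 0 < Q w}) |>.mpr hpos) ⟨t, ⟨ht, le_rfl⟩, rfl⟩

end QuadraticForm

section Continuity

variable {V : Type*} [NormedAddCommGroup V] [NormedSpace ℝ V] [FiniteDimensional ℝ V]
  (Q : QuadraticForm ℝ V)

theorem Continuous.bil {X : Type*} [TopologicalSpace X] {f g : X → V} (hf : Continuous f)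
    (hg : Continuous g) : Continuous fun x => bil Q (f x) (g x) := by
  simp only [bil_eq_associated]
  exact ((QuadraticMap.associated Q).toContinuousBilinearMap.continuous.comp hf).clm_apply hg

theorem continuous_quadraticForm : Continuous fun v => Q v := by
  simpa only [bil_self, id] using continuous_id.bil Q continuous_id

end Continuity

theorem stmt6_general {V : Type*} [NormedAddCommGroup V] [NormedSpace ℝ V]
    [FiniteDimensional ℝ V]
    (Q : QuadraticForm ℝ V)
    (P : Set V)
    (hP : ∃ x ∈ {v : V | 0 < Q v}, P = connectedComponentIn {v : V | 0 < Q v} x)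
    (C : Set V) (hCconv : Convex ℝ C)
    (hCcone : ∀ c : ℝ, 0 ≤ c → ∀ v ∈ C, c • v ∈ C)
    (hPC : closure P ⊆ C)
    (x y : V) (hx : x ∈ closure P) (hy : y ∈ C)
    (hx0 : Q x = 0) (hxy : 0 < bil Q x y) :
    x + y ∈ interior C := by
  obtain ⟨x₀, -, rfl⟩ := hP
  set U := {v : V | 0 < Q v}
  have hU : IsOpen U := isOpen_lt continuous_const (continuous_quadraticForm Q)
  obtain ⟨t, ⟨ht0, ht1⟩, hty⟩ : ∃ t ∈ Ioo (0 : ℝ) 1, 0 < 2 * bil Q x y + t * Q y := by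
    have h : ∀ᶠ t in 𝓝 (0 : ℝ), 0 < 2 * bil Q x y + t * Q y :=
      continuousAt_const.eventually_lt (by fun_prop) (by simpa using hxy)
    exact (Filter.Eventually.and (Ioo_mem_nhdsGT one_pos) (nhdsWithin_le_nhds h)).exists
  have hz : x + t • y ∈ closure (connectedComponentIn U x₀) := by
    have hbil : Continuous fun v => bil Q v y := continuous_id.bil Q continuous_const
    have hN : IsOpen {v | 0 < bil Q v y ∧ 0 < 2 * bil Q v y + t * Q y} :=
      (isOpen_lt continuous_const hbil).inter
        (isOpen_lt continuous_const ((hbil.const_mul 2).add continuous_const))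
    refine map_mem_closure (f := (· + t • y)) (continuous_add_const _)
      (hN.inter_closure ⟨⟨hxy, hty⟩, hx⟩) ?_
    rintro v ⟨⟨hvy, hvty⟩, hv⟩
    rw [connectedComponentIn_eq hv]
    exact add_smul_mem_connectedComponentIn Q ht0.le (connectedComponentIn_subset U x₀ hv)
      hvy.le hvty.le
  have hzU : 0 < Q (x + t • y) := by
    rw [map_add_smul_eq_bil, hx0, zero_add]
    exact mul_pos ht0 hty
  have hzC : x + t • y ∈ interior C :=
    interior_maximal (subset_closure.trans hPC) hU.connectedComponentIn
      (hU.closure_connectedComponentIn_inter_subset x₀ ⟨hz, hzU⟩)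
  convert hCconv.add_mem_interior_of_smul_mem hCcone hzC (hCcone (1 - t) (by linarith) y hy)
    using 1
  module

theorem stmt6 {V : Type*} [NormedAddCommGroup V] [NormedSpace ℝ V]
    [FiniteDimensional ℝ V] (k : ℕ) (hk : 2 ≤ k)
    (Q : QuadraticForm ℝ V) (hQ : HasSignatureOnePos k Q)
    (P : Set V)
    (hP : ∃ x ∈ {v : V | 0 < Q v}, P = connectedComponentIn {v : V | 0 < Q v} x)
    (C : Set V) (hCclosed : IsClosed C) (hCconv : Convex ℝ C)
    (hCcone : ∀ c : ℝ, 0 ≤ c → ∀ v ∈ C, c • v ∈ C)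
    (hPC : closure P ⊆ C) (hCint : (interior C).Nonempty)
    (x y : V) (hx : x ∈ closure P) (hy : y ∈ C)
    (hx0 : Q x = 0) (hxy : 0 < bil Q x y) :
    x + y ∈ interior C :=
  stmt6_general Q P hP C hCconv hCcone hPC x y hx hy hx0 hxy
end
end

section
/- Let V be a finite-dimensional real vector space, q a quadratic form of signature (1, k-1), and P a connected component of {q > 0}. If a, b ∈ closure(P), q(a) = 0, q(b) = 0, and a, b are not proportional, then q(a, b) > 0. -/
noncomputable section

/-!
Split `Q v = t v ^ 2 - ‖w v‖ ^ 2` into a time coordinate `t` and a Euclidean space part `w`.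
The positive cone is the disjoint union of the two open convex cones `‖w v‖ < t v` and
`‖w v‖ < -t v`, so `P` is one of them, say the first, and every `v ∈ closure P` satisfies
`‖w v‖ ≤ t v`. For null vectors this forces `t v = ‖w v‖`, hence
`bil Q a b = ‖w a‖ ‖w b‖ - ⟪w a, w b⟫ ≥ 0` by Cauchy–Schwarz, and the equality case of
Cauchy–Schwarz would make `a` and `b` proportional.
-/

open Set
open scoped RealInnerProductSpace

theorem HasSignatureOnePos.exists_time_space_split {k : ℕ} {V : Type*} [NormedAddCommGroup V]
    [NormedSpace ℝ V] {Q : QuadraticForm ℝ V} (hQ : HasSignatureOnePos k Q) :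
    ∃ (t : V →L[ℝ] ℝ) (w : V →L[ℝ] EuclideanSpace ℝ (Fin (k - 1))),
      (∀ v, Q v = t v ^ 2 - ‖w v‖ ^ 2) ∧ ∀ v, t v = 0 → w v = 0 → v = 0 := by
  obtain ⟨e, he⟩ := hQ
  have : FiniteDimensional ℝ V := e.symm.finiteDimensional
  let t : V →ₗ[ℝ] ℝ := (LinearMap.proj (Sum.inl 0)).comp e.toLinearMap
  let w : V →ₗ[ℝ] EuclideanSpace ℝ (Fin (k - 1)) :=
    (EuclideanSpace.equiv _ ℝ).symm.toLinearMap.comp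
      ((LinearMap.funLeft ℝ ℝ Sum.inr).comp e.toLinearMap)
  refine ⟨t.toContinuousLinearMap, w.toContinuousLinearMap, fun v => ?_, fun v ht hw => ?_⟩
  · simp [he, EuclideanSpace.norm_sq_eq, t, w]
  · refine e.injective ?_
    ext (j | i)
    · simpa [Subsingleton.elim j 0, t] using ht
    · simpa [w] using congrArg (· i) hw

section TimeSpaceSplit

variable {V E : Type*} [AddCommGroup V] [Module ℝ V] [TopologicalSpace V]
  [NormedAddCommGroup E] [InnerProductSpace ℝ E]

def futureCone (t : V →L[ℝ] ℝ) (w : V →L[ℝ] E) : Set V :=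
  {v | ‖w v‖ < t v}

theorem isOpen_futureCone (t : V →L[ℝ] ℝ) (w : V →L[ℝ] E) : IsOpen (futureCone t w) :=
  isOpen_lt (continuous_norm.comp w.continuous) t.continuous

theorem convex_futureCone (t : V →L[ℝ] ℝ) (w : V →L[ℝ] E) : Convex ℝ (futureCone t w) := by
  have h : ConvexOn ℝ univ (fun v => ‖w v‖ - t v) :=
    ((convexOn_norm convex_univ).comp_linearMap (w : V →ₗ[ℝ] E)).sub
      ((t : V →ₗ[ℝ] ℝ).concaveOn convex_univ)
  simpa [futureCone, sub_neg] using h.convex_lt 0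

theorem closure_futureCone_subset (t : V →L[ℝ] ℝ) (w : V →L[ℝ] E) :
    closure (futureCone t w) ⊆ {v | ‖w v‖ ≤ t v} :=
  closure_minimal (fun v hv => show ‖w v‖ ≤ t v from le_of_lt hv)
    (isClosed_le (continuous_norm.comp w.continuous) t.continuous)

theorem disjoint_futureCone_neg (t : V →L[ℝ] ℝ) (w : V →L[ℝ] E) :
    Disjoint (futureCone t w) (futureCone (-t) w) :=
  disjoint_left.2 fun v h₁ h₂ => by
    simp only [futureCone, mem_ofPred_eq, neg_apply] at h₁ h₂
    linarith [norm_nonneg (w v)]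

variable {Q : QuadraticForm ℝ V} {t : V →L[ℝ] ℝ} {w : V →L[ℝ] E}

theorem futureCone_subset_pos (hQ : ∀ v, Q v = t v ^ 2 - ‖w v‖ ^ 2) :
    futureCone t w ⊆ {v | 0 < Q v} := fun v hv => by
  have : ‖w v‖ ^ 2 < t v ^ 2 := pow_lt_pow_left₀ hv (norm_nonneg _) two_ne_zero
  simp only [mem_ofPred_eq, hQ]
  linarith

theorem pos_subset_futureCone_union (hQ : ∀ v, Q v = t v ^ 2 - ‖w v‖ ^ 2) :
    {v | 0 < Q v} ⊆ futureCone t w ∪ futureCone (-t) w := fun v hv => by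
  have : ‖w v‖ < |t v| := by
    simpa [abs_norm] using sq_lt_sq.1 (by simpa [hQ] using hv : ‖w v‖ ^ 2 < t v ^ 2)
  simpa [futureCone] using lt_abs.1 this

theorem connectedComponentIn_pos_eq_futureCone [IsTopologicalAddGroup V] [ContinuousSMul ℝ V]
    (hQ : ∀ v, Q v = t v ^ 2 - ‖w v‖ ^ 2)
    {x : V} (hx : x ∈ futureCone t w) :
    connectedComponentIn {v | 0 < Q v} x = futureCone t w := by
  have hsub := futureCone_subset_pos hQ
  refine Subset.antisymm ?_
    ((convex_futureCone t w).isPreconnected.subset_connectedComponentIn hx hsub)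
  exact isPreconnected_connectedComponentIn.subset_left_of_subset_union
    (isOpen_futureCone t w) (isOpen_futureCone (-t) w) (disjoint_futureCone_neg t w)
    ((connectedComponentIn_subset _ _).trans (pos_subset_futureCone_union hQ))
    ⟨x, mem_connectedComponentIn (hsub hx), hx⟩

theorem eq_norm_of_null (hQ : ∀ v, Q v = t v ^ 2 - ‖w v‖ ^ 2) {a : V} (ha : Q a = 0)
    (hle : ‖w a‖ ≤ t a) : t a = ‖w a‖ :=
  (sq_eq_sq₀ ((norm_nonneg _).trans hle) (norm_nonneg _)).1 (by linarith [hQ a])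

theorem bil_eq_of_split (hQ : ∀ v, Q v = t v ^ 2 - ‖w v‖ ^ 2) (u v : V) :
    bil Q u v = t u * t v - ⟪w u, w v⟫ := by
  simp only [bil, hQ, map_add, norm_add_sq_real]
  ring

theorem bil_pos_of_null (hQ : ∀ v, Q v = t v ^ 2 - ‖w v‖ ^ 2)
    (hinj : ∀ v, t v = 0 → w v = 0 → v = 0) {a b : V} (ha : t a = ‖w a‖) (hb : t b = ‖w b‖)
    (hab : ¬ ∃ c : ℝ, b = c • a ∨ a = c • b) : 0 < bil Q a b := by
  rw [bil_eq_of_split hQ, ha, hb, sub_pos]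
  refine (real_inner_le_norm _ _).lt_of_ne fun heq => hab ?_
  have hdep : ‖w b‖ • a = ‖w a‖ • b := by
    refine sub_eq_zero.1 (hinj _ (by simp [ha, hb, mul_comm]) ?_)
    simpa [sub_eq_zero] using inner_eq_norm_mul_iff_real.1 heq
  rcases eq_or_ne ‖w a‖ 0 with h0 | h0
  · exact ⟨0, .inr <| by rw [zero_smul]; exact hinj a (ha.trans h0) (norm_eq_zero.1 h0)⟩
  · exact ⟨‖w b‖ / ‖w a‖, .inl <| by rw [div_eq_inv_mul, mul_smul, hdep, inv_smul_smul₀ h0]⟩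

end TimeSpaceSplit

theorem stmt9_general {V : Type*} [NormedAddCommGroup V] [NormedSpace ℝ V]
    (k : ℕ)
    (Q : QuadraticForm ℝ V) (hQ : HasSignatureOnePos k Q)
    (P : Set V)
    (hP : ∃ x ∈ {v : V | 0 < Q v}, P = connectedComponentIn {v : V | 0 < Q v} x)
    (a b : V) (ha : a ∈ closure P) (hb : b ∈ closure P)
    (ha0 : Q a = 0) (hb0 : Q b = 0)
    (hprop : ¬ ∃ c : ℝ, b = c • a ∨ a = c • b) :
    0 < bil Q a b := by
  obtain ⟨t, w, hQtw, hinj⟩ := hQ.exists_time_space_split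
  obtain ⟨x, hx, rfl⟩ := hP
  obtain ⟨t, hQtw, hinj, hxt⟩ : ∃ t : V →L[ℝ] ℝ, (∀ v, Q v = t v ^ 2 - ‖w v‖ ^ 2) ∧
      (∀ v, t v = 0 → w v = 0 → v = 0) ∧ x ∈ futureCone t w := by
    rcases pos_subset_futureCone_union hQtw hx with h | h
    · exact ⟨t, hQtw, hinj, h⟩
    · exact ⟨-t, by simpa using hQtw, by simpa using hinj, h⟩
  rw [connectedComponentIn_pos_eq_futureCone hQtw hxt] at ha hb
  exact bil_pos_of_null hQtw hinj (eq_norm_of_null hQtw ha0 (closure_futureCone_subset t w ha))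
    (eq_norm_of_null hQtw hb0 (closure_futureCone_subset t w hb)) hprop

theorem stmt9 {V : Type*} [NormedAddCommGroup V] [NormedSpace ℝ V]
    [FiniteDimensional ℝ V] (k : ℕ) (hk : 2 ≤ k)
    (Q : QuadraticForm ℝ V) (hQ : HasSignatureOnePos k Q)
    (P : Set V)
    (hP : ∃ x ∈ {v : V | 0 < Q v}, P = connectedComponentIn {v : V | 0 < Q v} x)
    (a b : V) (ha : a ∈ closure P) (hb : b ∈ closure P)
    (ha0 : Q a = 0) (hb0 : Q b = 0)
    (hprop : ¬ ∃ c : ℝ, b = c • a ∨ a = c • b) :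
    0 < bil Q a b :=
  stmt9_general k Q hQ P hP a b ha hb ha0 hb0 hprop
end
end
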